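/- For every integer n ≥ 1, let L_n = {0, a₁, …, a_n, 1} be the lattice where 0 is bottom, 1 is top, and a₁, …, a_n are pairwise incomparable. Then K = {0, a₁} is a downward-closed sub-lattice of L_n, the quotient {y ∈ L_n | y ≥ a₁} is isomorphic to the two-element lattice 𝔹, and for n ≠ m the lattices L_n and L_m are not isomorphic. Consequently there are infinitely many pairwise non-isomorphic finite lattices L fitting in a short exact sequence 𝔹 → L → 𝔹. -/

import Mathlib

/-- A bundled complete lattice. -/
structure BLat : Type 1 where
  carrier : Type
  [lat : CompleteLattice carrier]

attribute [instance] BLat.lat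

/-- `L` is the lattice `L_n = {0, a₁, …, a_n, 1}` with bottom `0 = ⊥`, top `1 = ⊤`
and the `a i` pairwise incomparable strictly between `⊥` and `⊤`. -/
def IsLn (n : ℕ) (L : Type) [CompleteLattice L] (a : Fin n → L) : Prop :=
  Function.Injective a ∧
  (∀ i, ⊥ < a i ∧ a i < ⊤) ∧
  (∀ i j, i ≠ j → ¬ a i ≤ a j) ∧
  (∀ x : L, x = ⊥ ∨ x = ⊤ ∨ ∃ i, x = a i) ∧
  (⊥ : L) ≠ ⊤

/-!
In `L_n` every `a i` is both an atom and a coatom. Hence `Set.Iic (a i) = {⊥, a i}` is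
downward closed and closed under joins, while `Set.Ici (a i)` is a simple order and therefore
isomorphic to `Bool`. Since `L_n` has exactly `n + 2` elements, different `n` give
non-isomorphic lattices. A model of `L_n` is the closure system on `Option (Fin n)` whose
closed sets are the whole type, the empty set and the singletons `{some i}`.
-/

open Set

namespace IsLn

variable {n : ℕ} {L : Type} [CompleteLattice L] {a : Fin n → L}

theorem isAtom (h : IsLn n L a) (i : Fin n) : IsAtom (a i) := by
  obtain ⟨-, hbt, hinc, hcls, -⟩ := h
  refine ⟨(hbt i).1.ne', fun y hy => ?_⟩
  rcases hcls y with rfl | rfl | ⟨j, rfl⟩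
  · rfl
  · exact absurd hy (hbt i).2.asymm
  · obtain rfl | hji := eq_or_ne j i
    · exact absurd hy (lt_irrefl _)
    · exact absurd hy.le (hinc j i hji)

theorem isCoatom (h : IsLn n L a) (i : Fin n) : IsCoatom (a i) := by
  obtain ⟨-, hbt, hinc, hcls, -⟩ := h
  refine ⟨(hbt i).2.ne, fun y hy => ?_⟩
  rcases hcls y with rfl | rfl | ⟨j, rfl⟩
  · exact absurd hy (hbt i).1.asymm
  · rfl
  · obtain rfl | hij := eq_or_ne i j
    · exact absurd hy (lt_irrefl _)
    · exact absurd hy.le (hinc i j hij)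

noncomputable def equivSumBool (h : IsLn n L a) : Fin n ⊕ Bool ≃ L := by
  obtain ⟨hinj, hbt, -, hcls, hne⟩ := h
  refine .ofBijective (Sum.elim a fun b => cond b ⊤ ⊥) ⟨hinj.sumElim ?_ ?_, fun x => ?_⟩
  · rintro (_ | _) (_ | _) hb <;> first | rfl | exact absurd hb hne | exact absurd hb.symm hne
  · rintro i (_ | _) hi
    · exact (hbt i).1.ne' hi
    · exact (hbt i).2.ne hi
  · rcases hcls x with rfl | rfl | ⟨i, rfl⟩
    · exact ⟨.inr false, rfl⟩
    · exact ⟨.inr true, rfl⟩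
    · exact ⟨.inl i, rfl⟩

theorem natCard (h : IsLn n L a) : Nat.card L = n + 2 := by
  simp [← Nat.card_congr h.equivSumBool]

end IsLn

section

variable {α : Type}

/-- `none` lies only in the top closed set; it keeps `⊤` above the atoms even when `α` has a
single element. -/
def IsMClosed (s : Set (Option α)) : Prop :=
  s = univ ∨ (s.Subsingleton ∧ none ∉ s)

theorem IsMClosed.sInter {S : Set (Set (Option α))} (h : ∀ s ∈ S, IsMClosed s) :
    IsMClosed (⋂₀ S) := by
  by_cases hS : ∃ s ∈ S, s ≠ univ
  · obtain ⟨s, hs, hne⟩ := hS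
    obtain ⟨hsub, hnone⟩ := (h s hs).resolve_left hne
    exact .inr ⟨hsub.anti (sInter_subset_of_mem hs), fun hmem => hnone (hmem s hs)⟩
  · exact .inl (sInter_eq_univ.2 fun s hs => by_contra fun hne => hS ⟨s, hs, hne⟩)

/-- The lattice `M_α` of height two whose atoms are the elements of `α`. -/
def MLattice (α : Type) : Type := {s : Set (Option α) // IsMClosed s}

namespace MLattice

instance : PartialOrder (MLattice α) := Subtype.partialOrder _

instance : InfSet (MLattice α) where
  sInf S := ⟨⋂₀ (Subtype.val '' S), IsMClosed.sInter (by rintro _ ⟨s, -, rfl⟩; exact s.2)⟩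

noncomputable instance : CompleteLattice (MLattice α) :=
  completeLatticeOfInf _ fun S =>
    ⟨fun s hs => sInter_subset_of_mem ⟨s, hs, rfl⟩,
      fun _ ht => subset_sInter (by rintro _ ⟨s, hs, rfl⟩; exact ht hs)⟩

def atom (a : α) : MLattice α := ⟨{some a}, .inr ⟨subsingleton_singleton, by simp⟩⟩

theorem le_iff {x y : MLattice α} : x ≤ y ↔ x.1 ⊆ y.1 := Iff.rfl

theorem val_atom (a : α) : (atom a).1 = {some a} := rfl

theorem val_bot : (⊥ : MLattice α).1 = ∅ :=
  congrArg Subtype.val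
    (bot_unique (a := show MLattice α from ⟨∅, .inr ⟨subsingleton_empty, id⟩⟩) (empty_subset _)).symm

theorem val_top : (⊤ : MLattice α).1 = univ :=
  congrArg Subtype.val (top_unique (a := show MLattice α from ⟨univ, .inl rfl⟩) (subset_univ _)).symm

theorem eq_bot_or_eq_top_or_eq_atom (x : MLattice α) : x = ⊥ ∨ x = ⊤ ∨ ∃ a, x = atom a := by
  rcases x with ⟨s, rfl | ⟨hsub, hnone⟩⟩
  · exact .inr (.inl (Subtype.ext val_top.symm))
  · rcases hsub.eq_empty_or_singleton with rfl | ⟨_ | a, rfl⟩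
    · exact .inl (Subtype.ext val_bot.symm)
    · exact absurd rfl hnone
    · exact .inr (.inr ⟨a, rfl⟩)

theorem isLn (n : ℕ) : IsLn n (MLattice (Fin n)) atom := by
  have none_mem_top : none ∈ (⊤ : MLattice (Fin n)).1 := val_top ▸ mem_univ _
  refine ⟨fun i j hij => ?_, fun i => ⟨?_, ?_⟩, fun i j hij hle => hij ?_,
    eq_bot_or_eq_top_or_eq_atom, fun h => ?_⟩
  · simpa [val_atom] using congrArg Subtype.val hij
  · refine bot_lt_iff_ne_bot.2 fun h => ?_
    simpa [val_atom, val_bot] using congrArg Subtype.val h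
  · refine lt_top_iff_ne_top.2 fun h => ?_
    simp [val_atom, ← h] at none_mem_top
  · simpa [val_atom] using le_iff.1 hle
  · simp [val_bot, ← h] at none_mem_top

end MLattice

end

theorem stmt18 :
    (∀ n : ℕ, ∃ X : BLat, ∃ a : Fin (n + 1) → X.carrier, IsLn (n + 1) X.carrier a) ∧
    (∀ (n : ℕ) (L : Type) [CompleteLattice L], ∀ (a : Fin (n + 1) → L),
      IsLn (n + 1) L a →
      (∀ x ∈ ({⊥, a 0} : Set L), ∀ y : L, y ≤ x → y ∈ ({⊥, a 0} : Set L)) ∧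
      (∀ S : Set L, S ⊆ {⊥, a 0} → sSup S ∈ ({⊥, a 0} : Set L)) ∧
      Nonempty ({y : L // a 0 ≤ y} ≃o Bool)) ∧
    (∀ (n m : ℕ) (L : Type) [CompleteLattice L] (L' : Type) [CompleteLattice L'],
      ∀ (a : Fin (n + 1) → L) (b : Fin (m + 1) → L'),
      IsLn (n + 1) L a → IsLn (m + 1) L' b → n ≠ m →
      IsEmpty (L ≃o L')) := by
  classical
  refine ⟨fun n => ⟨⟨MLattice (Fin (n + 1))⟩, MLattice.atom, MLattice.isLn (n + 1)⟩, ?_, ?_⟩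
  · intro n L _ a h
    rw [← (h.isAtom 0).Iic_eq]
    have := Set.isSimpleOrder_Ici_iff_isCoatom.2 (h.isCoatom 0)
    exact ⟨fun x hx y hy => hy.trans hx, fun S hS => sSup_le hS,
      ⟨(IsSimpleOrder.orderIsoBool : Set.Ici (a 0) ≃o Bool)⟩⟩
  · intro n m L _ L' _ a b ha hb hnm
    refine ⟨fun e => hnm ?_⟩
    have hcard := Nat.card_congr e.toEquiv
    rw [ha.natCard, hb.natCard] at hcard
    omega
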